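/- Deterministic form of Lemma 1 (warm-up stage reaches the threshold level a). Assume η₀·L ≤ 1 and 0 < η₀·μ < 1. Let a, G, δ > 0, let m₀ ≥ 4G²/(δ·μ·a), let F(u₀) > 0, and let the natural number T₀ satisfy T₀ ≥ log(2F(u₀)/a) / log(1/(1 − η₀·μ)). Suppose u₀, u₁, …, u_{T₀} ∈ E are generated by u_{t+1} = u_t − η₀·g̃_t, where for every t the vector g̃_t ∈ E satisfies ‖g̃_t − ∇F(u_t)‖² ≤ 4G²/(δ·m₀). Then F(u_{T₀}) ≤ a. -/

import Mathlib

/-!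
Each inexact gradient step contracts the excess over the noise floor: by the descent lemma,
`η L ≤ 1` and the polarisation identity
`-⟪∇F, g⟫ + ‖g‖² / 2 = (‖g - ∇F‖² - ‖∇F‖²) / 2`, the PL inequality gives
`F(u - η g) ≤ (1 - ημ) F(u) + η ε / 2` when `‖g - ∇F(u)‖² ≤ ε`. The choice of `m₀` makes
`ε ≤ μ a`, so `F(u_t) - a/2` shrinks by the factor `r = 1 - η₀μ` per step, and `T₀` steps make
`r ^ T₀ F(u₀) ≤ a / 2`.
-/

open Real
open scoped RealInnerProductSpace

section Smooth

variable {E : Type*} [NormedAddCommGroup E] [InnerProductSpace ℝ E] [CompleteSpace E]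
  {F : E → ℝ} {L : ℝ}

lemma hasDerivAt_comp_add_smul (hF : Differentiable ℝ F) (x v : E) (t : ℝ) :
    HasDerivAt (fun s : ℝ => F (x + s • v)) ⟪gradient F (x + t • v), v⟫ t := by
  have hline : HasDerivAt (fun s : ℝ => x + s • v) v t := by
    simpa using ((hasDerivAt_id t).smul_const v).const_add x
  rw [inner_gradient_left]
  exact (hF _).hasFDerivAt.comp_hasDerivAt t hline

theorem le_add_inner_gradient_add_of_lipschitz (hF : Differentiable ℝ F)
    (hlip : ∀ w u : E, ‖gradient F w - gradient F u‖ ≤ L * ‖w - u‖) (x v : E) :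
    F (x + v) ≤ F x + ⟪gradient F x, v⟫ + L / 2 * ‖v‖ ^ 2 := by
  set φ : ℝ → ℝ := fun t => F (x + t • v) - t * ⟪gradient F x, v⟫ - L / 2 * t ^ 2 * ‖v‖ ^ 2
  set φ' : ℝ → ℝ := fun t => ⟪gradient F (x + t • v) - gradient F x, v⟫ - L * t * ‖v‖ ^ 2
  have hφ : ∀ t, HasDerivAt φ (φ' t) t := fun t => by
    refine (((hasDerivAt_comp_add_smul hF x v t).sub
      ((hasDerivAt_id t).mul_const ⟪gradient F x, v⟫)).sub
      (((hasDerivAt_pow 2 t).const_mul (L / 2)).mul_const (‖v‖ ^ 2))).congr_deriv ?_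
    simp only [φ', inner_sub_left]
    ring
  have hφ'_nonpos : ∀ t ∈ Set.Ioo (0 : ℝ) 1, φ' t ≤ 0 := by
    intro t ht
    have : ⟪gradient F (x + t • v) - gradient F x, v⟫ ≤ L * t * ‖v‖ ^ 2 :=
      calc ⟪gradient F (x + t • v) - gradient F x, v⟫
          ≤ ‖gradient F (x + t • v) - gradient F x‖ * ‖v‖ := real_inner_le_norm _ _
        _ ≤ L * ‖t • v‖ * ‖v‖ := by gcongr; simpa using hlip (x + t • v) x
        _ = L * t * ‖v‖ ^ 2 := by rw [norm_smul, norm_of_nonneg ht.1.le]; ring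
    exact sub_nonpos.mpr this
  have hanti : AntitoneOn φ (Set.Icc 0 1) :=
    antitoneOn_of_hasDerivWithinAt_nonpos (convex_Icc 0 1)
      (fun t _ => (hφ t).continuousAt.continuousWithinAt)
      (fun t _ => (hφ t).hasDerivWithinAt) (by simpa using hφ'_nonpos)
  have h10 : φ 1 ≤ φ 0 := hanti (by simp) (by simp) zero_le_one
  simp only [φ, one_smul, zero_smul, add_zero, one_pow, ne_eq, OfNat.ofNat_ne_zero,
    not_false_eq_true, zero_pow, one_mul, zero_mul, mul_zero, sub_zero] at h10
  linarith

theorem le_of_inexact_gradient_step (hF : Differentiable ℝ F)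
    (hlip : ∀ w u : E, ‖gradient F w - gradient F u‖ ≤ L * ‖w - u‖) {μ η ε : ℝ} {w g : E}
    (hPL : 2 * μ * F w ≤ ‖gradient F w‖ ^ 2) (hη : 0 ≤ η) (hηL : η * L ≤ 1)
    (hg : ‖g - gradient F w‖ ^ 2 ≤ ε) :
    F (w - η • g) ≤ (1 - η * μ) * F w + η / 2 * ε :=
  calc F (w - η • g)
      ≤ F w + ⟪gradient F w, -(η • g)⟫ + L / 2 * ‖-(η • g)‖ ^ 2 := by
        simpa [sub_eq_add_neg] using le_add_inner_gradient_add_of_lipschitz hF hlip w (-(η • g))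
    _ = F w - η * ⟪gradient F w, g⟫ + η * L * (η / 2 * ‖g‖ ^ 2) := by
        rw [inner_neg_right, real_inner_smul_right, norm_neg, norm_smul, norm_of_nonneg hη]
        ring
    _ ≤ F w - η * ⟪gradient F w, g⟫ + η / 2 * ‖g‖ ^ 2 := by
        linarith [mul_le_of_le_one_left (by positivity : 0 ≤ η / 2 * ‖g‖ ^ 2) hηL]
    _ = F w + η / 2 * (‖g - gradient F w‖ ^ 2 - ‖gradient F w‖ ^ 2) := by
        rw [norm_sub_sq_real, real_inner_comm]
        ring
    _ ≤ F w + η / 2 * (ε - 2 * μ * F w) := by gcongr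
    _ = (1 - η * μ) * F w + η / 2 * ε := by ring

end Smooth

lemma sub_le_pow_mul_sub_of_le_mul_add {x : ℕ → ℝ} {r b : ℝ} (hr : 0 ≤ r) :
    ∀ {T : ℕ}, (∀ t < T, x (t + 1) ≤ r * x t + (1 - r) * b) → x T - b ≤ r ^ T * (x 0 - b)
  | 0, _ => by simp
  | T + 1, h => by
    have ih := sub_le_pow_mul_sub_of_le_mul_add hr fun t ht => h t (Nat.lt_succ_of_lt ht)
    calc x (T + 1) - b ≤ r * (x T - b) := by linarith [h T (Nat.lt_succ_self T)]
      _ ≤ r * (r ^ T * (x 0 - b)) := by gcongr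
      _ = r ^ (T + 1) * (x 0 - b) := by ring

lemma pow_mul_le_one_of_log_div_log_inv_le {r C : ℝ} {T : ℕ} (hr₀ : 0 < r) (hr₁ : r < 1)
    (hC : 0 < C) (hT : log C / log (1 / r) ≤ T) : r ^ T * C ≤ 1 := by
  have hlog : 0 < log (1 / r) := log_pos (by rw [one_div]; exact one_lt_inv₀ hr₀ |>.mpr hr₁)
  rw [div_le_iff₀ hlog, one_div, log_inv] at hT
  rw [← log_nonpos_iff (by positivity), log_mul (by positivity) hC.ne', log_pow]
  linarith

theorem warmup_reaches_threshold_general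
    {E : Type*} [NormedAddCommGroup E] [InnerProductSpace ℝ E] [CompleteSpace E]
    (F : E → ℝ) (L μ : ℝ) (hμ : 0 < μ)
    (hdiff : Differentiable ℝ F)
    (hlip : ∀ w u : E, ‖gradient F w - gradient F u‖ ≤ L * ‖w - u‖)
    (hPL : ∀ w : E, 2 * μ * F w ≤ ‖gradient F w‖ ^ 2)
    (η₀ a G δ m₀ : ℝ)
    (hη₀L : η₀ * L ≤ 1) (hη₀μ0 : 0 < η₀ * μ) (hη₀μ1 : η₀ * μ < 1)
    (ha : 0 < a) (hG : 0 < G) (hδ : 0 < δ)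
    (hm₀ : 4 * G ^ 2 / (δ * μ * a) ≤ m₀)
    (T₀ : ℕ) (u g : ℕ → E)
    (hu₀ : 0 < F (u 0))
    (hT₀ : Real.log (2 * F (u 0) / a) / Real.log (1 / (1 - η₀ * μ)) ≤ T₀)
    (hupd : ∀ t < T₀, u (t + 1) = u t - η₀ • g t)
    (hg : ∀ t < T₀, ‖g t - gradient F (u t)‖ ^ 2 ≤ 4 * G ^ 2 / (δ * m₀)) :
    F (u T₀) ≤ a := by
  set r := 1 - η₀ * μ
  have hη₀ : 0 ≤ η₀ := (pos_of_mul_pos_left hη₀μ0 hμ.le).le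
  have hnoise : 4 * G ^ 2 / (δ * m₀) ≤ μ * a := by
    have hm₀pos : 0 < m₀ := lt_of_lt_of_le (by positivity) hm₀
    rw [div_le_iff₀ (by positivity)] at hm₀ ⊢
    nlinarith
  have hstep : ∀ t < T₀, F (u (t + 1)) ≤ r * F (u t) + (1 - r) * (a / 2) := fun t ht => by
    rw [hupd t ht]
    calc _ ≤ r * F (u t) + η₀ / 2 * (μ * a) :=
          le_of_inexact_gradient_step hdiff hlip (hPL _) hη₀ hη₀L ((hg t ht).trans hnoise)
      _ = _ := by ring
  have hr₀ : 0 < r := by linarith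
  have hcontract := sub_le_pow_mul_sub_of_le_mul_add (x := fun t => F (u t)) hr₀.le hstep
  have hpow : r ^ T₀ * (2 * F (u 0) / a) ≤ 1 :=
    pow_mul_le_one_of_log_div_log_inv_le hr₀ (by linarith) (by positivity) hT₀
  rw [mul_div_assoc', div_le_one ha] at hpow
  linarith [mul_nonneg (pow_nonneg hr₀.le T₀) ha.le]

/-- Deterministic form of Lemma 1 (warm-up stage reaches the threshold level `a`). -/
theorem warmup_reaches_threshold
    {E : Type*} [NormedAddCommGroup E] [InnerProductSpace ℝ E] [CompleteSpace E]
    (F : E → ℝ) (L μ : ℝ) (hL : 0 < L) (hμ : 0 < μ)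
    (hdiff : Differentiable ℝ F)
    (hlip : ∀ w u : E, ‖gradient F w - gradient F u‖ ≤ L * ‖w - u‖)
    (hFnonneg : ∀ w : E, 0 ≤ F w)
    (hPL : ∀ w : E, 2 * μ * F w ≤ ‖gradient F w‖ ^ 2)
    (η₀ a G δ m₀ : ℝ)
    (hη₀L : η₀ * L ≤ 1) (hη₀μ0 : 0 < η₀ * μ) (hη₀μ1 : η₀ * μ < 1)
    (ha : 0 < a) (hG : 0 < G) (hδ : 0 < δ)
    (hm₀ : 4 * G ^ 2 / (δ * μ * a) ≤ m₀)
    (T₀ : ℕ) (u g : ℕ → E)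
    (hu₀ : 0 < F (u 0))
    (hT₀ : Real.log (2 * F (u 0) / a) / Real.log (1 / (1 - η₀ * μ)) ≤ T₀)
    (hupd : ∀ t < T₀, u (t + 1) = u t - η₀ • g t)
    (hg : ∀ t < T₀, ‖g t - gradient F (u t)‖ ^ 2 ≤ 4 * G ^ 2 / (δ * m₀)) :
    F (u T₀) ≤ a :=
  warmup_reaches_threshold_general F L μ hμ hdiff hlip hPL η₀ a G δ m₀ hη₀L hη₀μ0 hη₀μ1 ha hG hδ hm₀
    T₀ u g hu₀ hT₀ hupd hg
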